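/- arXiv:2305.12911 — 5 statements merged into one kernel-verified Lean document; each statement's English description precedes it below -/
import Mathlib

section
/- Let a > 0, b ∈ ℝ, l1 < l2, and let φ : ℝ → ℝ be bounded and measurable. Define G(x, ξ, t) = (exp(−bt)/(2a·√(πt)))·exp(−(ξ−x)²/(4a²t)). If x ∈ (l1, l2) and φ is continuous at x, then lim_{t → 0⁺} ∫_{l1}^{l2} φ(ξ)·G(x, ξ, t) dξ = φ(x). -/
/-!
Substituting `ξ = x + 2a√t·s` turns the integral into
`e^{-bt}/√π · ∫ φ(x + 2a√t·s) e^{-s²} ds` over `[(l1 - x)/(2a√t), (l2 - x)/(2a√t)]`.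
As `t → 0⁺` this interval exhausts `ℝ` because `x` is interior, and the integrand tends to
`φ(x) e^{-s²}` under the bound `sup |φ| · e^{-s²}`; dominated convergence and `∫ e^{-s²} = √π`
give the limit `φ(x)`.
-/

open MeasureTheory Real Filter Set intervalIntegral Topology

theorem tendsto_intervalIntegral_comp_add_mul {ι : Type*} {l : Filter ι} [l.IsCountablyGenerated]
    {φ g : ℝ → ℝ} {x C : ℝ} (hφm : Measurable φ) (hC : ∀ ξ, |φ ξ| ≤ C)
    (hφc : ContinuousAt φ x) (hg : Integrable g) {c s₁ s₂ : ι → ℝ}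
    (hc : Tendsto c l (𝓝 0)) (hs₁ : Tendsto s₁ l atBot) (hs₂ : Tendsto s₂ l atTop) :
    Tendsto (fun i => ∫ s in s₁ i..s₂ i, φ (x + c i * s) * g s) l (𝓝 (φ x * ∫ s, g s)) := by
  set F : ι → ℝ → ℝ := fun i => (Ioc (s₁ i) (s₂ i)).indicator fun s => φ (x + c i * s) * g s
  have h_eq : ∀ᶠ i in l, ∫ s, F i s = ∫ s in s₁ i..s₂ i, φ (x + c i * s) * g s := by
    filter_upwards [hs₁.eventually_le_atBot 0, hs₂.eventually_ge_atTop 0] with i h₁ h₂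
    rw [MeasureTheory.integral_indicator measurableSet_Ioc, integral_of_le (h₁.trans h₂)]
  have h_meas : ∀ i, AEStronglyMeasurable (F i) volume := fun i =>
    ((hφm.comp (by fun_prop)).aestronglyMeasurable.mul hg.aestronglyMeasurable).indicator
      measurableSet_Ioc
  have h_bound : ∀ i, ∀ᵐ s, ‖F i s‖ ≤ C * ‖g s‖ := fun i => ae_of_all _ fun s => by
    refine (norm_indicator_le_norm_self _ _).trans ?_
    rw [norm_mul, Real.norm_eq_abs]
    exact mul_le_mul_of_nonneg_right (hC _) (norm_nonneg _)
  have h_lim : ∀ s, Tendsto (fun i => F i s) l (𝓝 (φ x * g s)) := fun s => by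
    have h_arg : Tendsto (fun i => x + c i * s) l (𝓝 x) := by
      simpa using tendsto_const_nhds.add (hc.mul_const s)
    refine Tendsto.congr' ?_ ((hφc.tendsto.comp h_arg).mul_const (g s))
    filter_upwards [hs₁.eventually_lt_atBot s, hs₂.eventually_ge_atTop s] with i h₁ h₂
    exact (indicator_of_mem (mem_Ioc.2 ⟨h₁, h₂⟩) (fun s => φ (x + c i * s) * g s)).symm
  rw [← MeasureTheory.integral_const_mul]
  exact (tendsto_integral_filter_of_dominated_convergence _ (.of_forall h_meas)
    (.of_forall h_bound) (hg.norm.const_mul C) (ae_of_all _ h_lim)).congr' h_eq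

noncomputable def reactionDiffusionKernel (a b y ξ τ : ℝ) : ℝ :=
  Real.exp (-b * τ) / (2 * a * √(π * τ)) * Real.exp (-(ξ - y) ^ 2 / (4 * a ^ 2 * τ))

theorem mul_reactionDiffusionKernel_add_mul {a t : ℝ} (ha : a ≠ 0) (ht : 0 < t) (b x s : ℝ) :
    2 * a * √t * reactionDiffusionKernel a b x (x + 2 * a * √t * s) t
      = Real.exp (-b * t) / √π * Real.exp (-s ^ 2) := by
  have h_exponent : -(x + 2 * a * √t * s - x) ^ 2 / (4 * a ^ 2 * t) = -s ^ 2 := by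
    rw [add_sub_cancel_left, mul_pow, mul_pow, sq_sqrt ht.le]
    field_simp
    ring
  rw [reactionDiffusionKernel, h_exponent, sqrt_mul pi_pos.le]
  field_simp

theorem integral_mul_reactionDiffusionKernel {a t : ℝ} (ha : a ≠ 0) (ht : 0 < t)
    (b x l₁ l₂ : ℝ) (φ : ℝ → ℝ) :
    ∫ ξ in l₁..l₂, φ ξ * reactionDiffusionKernel a b x ξ t
      = Real.exp (-b * t) / √π * ∫ s in (l₁ - x) / (2 * a * √t)..(l₂ - x) / (2 * a * √t),
          φ (x + 2 * a * √t * s) * Real.exp (-s ^ 2) := by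
  set c := 2 * a * √t
  have hc : c ≠ 0 := mul_ne_zero (by simpa using ha) (sqrt_pos.2 ht).ne'
  have h_end : ∀ l, x + c * ((l - x) / c) = l := fun l => by field_simp; ring
  conv_lhs => rw [← h_end l₁, ← h_end l₂, ← smul_integral_comp_add_mul]
  rw [smul_eq_mul,
    ← intervalIntegral.integral_const_mul, ← intervalIntegral.integral_const_mul]
  congr 1 with s
  rw [mul_left_comm, mul_reactionDiffusionKernel_add_mul ha ht b x s]
  ring

theorem tendsto_two_mul_sqrt_nhdsGT_zero {a : ℝ} (ha : 0 < a) :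
    Tendsto (fun t => 2 * a * √t) (𝓝[>] 0) (𝓝[>] 0) := by
  refine tendsto_nhdsWithin_iff.2 ⟨?_, ?_⟩
  · simpa using ((continuous_sqrt.tendsto 0).const_mul (2 * a)).mono_left nhdsWithin_le_nhds
  · filter_upwards [self_mem_nhdsWithin] with t ht
    exact mul_pos (by positivity) (sqrt_pos.2 ht)

theorem stmt_6_general (a b l1 l2 : ℝ) (ha : 0 < a)
    (φ : ℝ → ℝ) (hφm : Measurable φ) (hφb : ∃ C, ∀ ξ, |φ ξ| ≤ C)
    (G : ℝ → ℝ → ℝ → ℝ)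
    (hG : ∀ y ξ τ, G y ξ τ
      = (Real.exp (-b * τ) / (2 * a * Real.sqrt (π * τ)))
          * Real.exp (-(ξ - y) ^ 2 / (4 * a ^ 2 * τ)))
    (x : ℝ) (hx : x ∈ Ioo l1 l2) (hφc : ContinuousAt φ x) :
    Tendsto (fun t => ∫ ξ in l1..l2, φ ξ * G x ξ t)
      (nhdsWithin 0 (Ioi 0)) (nhds (φ x)) := by
  obtain ⟨C, hC⟩ := hφb
  obtain rfl : G = reactionDiffusionKernel a b := funext₃ hG
  have hc := tendsto_two_mul_sqrt_nhdsGT_zero ha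
  have hs₁ := hc.inv_tendsto_nhdsGT_zero.const_mul_atTop_of_neg (sub_neg.2 hx.1)
  have hs₂ := hc.inv_tendsto_nhdsGT_zero.const_mul_atTop (sub_pos.2 hx.2)
  simp only [Pi.inv_apply, ← div_eq_mul_inv] at hs₁ hs₂
  have h_int := tendsto_intervalIntegral_comp_add_mul hφm hC hφc
    (by simpa using integrable_exp_neg_mul_sq one_pos) (tendsto_nhds_of_tendsto_nhdsWithin hc)
    hs₁ hs₂
  have h_exp : Tendsto (fun t => Real.exp (-b * t) / √π) (𝓝[>] 0) (𝓝 (1 / √π)) := by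
    have h := ((continuous_exp.comp (continuous_const_mul (-b))).tendsto 0).div_const √π
    simpa using h.mono_left nhdsWithin_le_nhds
  have h_lim : 1 / √π * (φ x * ∫ s, Real.exp (-s ^ 2)) = φ x := by
    have h_gauss : ∫ s, Real.exp (-s ^ 2) = √π := by simpa using integral_gaussian 1
    rw [h_gauss]
    field_simp
  rw [← h_lim]
  refine (h_exp.mul h_int).congr' ?_
  filter_upwards [self_mem_nhdsWithin] with t ht
  exact (integral_mul_reactionDiffusionKernel ha.ne' ht b x l1 l2 φ).symm

/-- Approximate-identity property of the reaction–diffusion kernel: at an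
interior point of continuity of the (bounded measurable) initial datum `φ`,
`∫_{l1}^{l2} φ(ξ) G(x,ξ,t) dξ → φ(x)` as `t → 0⁺`. -/
theorem stmt_6 (a b l1 l2 : ℝ) (ha : 0 < a) (hl : l1 < l2)
    (φ : ℝ → ℝ) (hφm : Measurable φ) (hφb : ∃ C, ∀ ξ, |φ ξ| ≤ C)
    (G : ℝ → ℝ → ℝ → ℝ)
    (hG : ∀ y ξ τ, G y ξ τ
      = (Real.exp (-b * τ) / (2 * a * Real.sqrt (π * τ)))
          * Real.exp (-(ξ - y) ^ 2 / (4 * a ^ 2 * τ)))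
    (x : ℝ) (hx : x ∈ Ioo l1 l2) (hφc : ContinuousAt φ x) :
    Tendsto (fun t => ∫ ξ in l1..l2, φ ξ * G x ξ t)
      (nhdsWithin 0 (Ioi 0)) (nhds (φ x)) :=
  stmt_6_general a b l1 l2 ha φ hφm hφb G hG x hx hφc
end

section
/- Let a > 0, η > 0, b ∈ ℝ and p ∈ ℝ with b + p > 0. Then ∫₀^{∞} exp(−pt)·(η/(2a·√π))·t^{−3/2}·exp(−bt)·exp(−η²/(4a²t)) dt = exp(−η·√(b+p)/a). -/
/-!
Completing the square, `c²/(4t) + r²t = (c/(2√t) ± r√t)² ∓ cr`, shows that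
`t ↦ exp (± c r) · erfc (c/(2√t) ± r√t)` has derivative
`(2/√π) · exp (-(r²t + c²/(4t))) · (c/(4t√t) ∓ r/(2√t))`, so the average of the two is an
antiderivative of `c/(2√π) · t^(-3/2) · exp (-(r²t + c²/(4t)))`. As `t → 0⁺` both erfc arguments
tend to `+∞`, so the antiderivative tends to `0`; as `t → ∞` they tend to `∓∞`, so it tends to
`exp (-c r)`. With `c = η/a` and `r = √(b+p)` this is the claimed Laplace transform.
-/

open MeasureTheory Real Set Filter Topology

noncomputable def erf (x : ℝ) : ℝ := 2 / √π * ∫ u in (0:ℝ)..x, exp (-u ^ 2)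

theorem hasDerivAt_erf (x : ℝ) : HasDerivAt erf (2 / √π * exp (-x ^ 2)) x :=
  ((continuous_exp.comp (continuous_pow 2).neg).integral_hasStrictDerivAt 0 x).hasDerivAt.const_mul
    _

theorem erf_neg (x : ℝ) : erf (-x) = -erf x := by
  have h := intervalIntegral.integral_comp_neg (a := 0) (b := x) fun u => exp (-u ^ 2)
  simp only [neg_sq, neg_zero] at h
  rw [erf, erf, h, intervalIntegral.integral_symm, mul_neg]

theorem tendsto_erf_atTop : Tendsto erf atTop (𝓝 1) := by
  have hint : IntegrableOn (fun u : ℝ => exp (-u ^ 2)) (Ioi 0) := by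
    simpa using (integrable_exp_neg_mul_sq one_pos).integrableOn
  have hval : ∫ u in Ioi (0:ℝ), exp (-u ^ 2) = √π / 2 := by
    simpa using integral_gaussian_Ioi 1
  have h := (intervalIntegral_tendsto_integral_Ioi 0 hint tendsto_id).const_mul (2 / √π)
  rwa [hval, div_mul_div_cancel₀ (sqrt_pos.2 pi_pos).ne', div_self two_ne_zero] at h

theorem tendsto_erf_atBot : Tendsto erf atBot (𝓝 (-1)) := by
  have h := (tendsto_erf_atTop.comp tendsto_neg_atBot_atTop).neg
  refine h.congr fun x => ?_
  rw [Function.comp_apply, erf_neg, neg_neg]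

noncomputable def levyArg (c r t : ℝ) : ℝ := c / (2 * √t) + r * √t

noncomputable def levyErfcTerm (c r t : ℝ) : ℝ := exp (c * r) * (1 - erf (levyArg c r t))

theorem sq_levyArg {t : ℝ} (ht : 0 < t) (c r : ℝ) :
    levyArg c r t ^ 2 = c ^ 2 / (4 * t) + c * r + r ^ 2 * t := by
  have hs : 0 < √t := sqrt_pos.2 ht
  have hst : √t ^ 2 = t := sq_sqrt ht.le
  rw [levyArg]
  field_simp
  rw [hst]
  ring

theorem hasDerivAt_levyArg {t : ℝ} (ht : 0 < t) (c r : ℝ) :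
    HasDerivAt (levyArg c r) (r / (2 * √t) - c / (4 * t * √t)) t := by
  have hs : 0 < √t := sqrt_pos.2 ht
  have hsqrt := hasDerivAt_sqrt ht.ne'
  refine (((hasDerivAt_const t c).div (hsqrt.const_mul 2) (by positivity)).add
    (hsqrt.const_mul r)).congr_deriv ?_
  field_simp
  rw [sq_sqrt ht.le]
  ring

theorem hasDerivAt_levyErfcTerm {t : ℝ} (ht : 0 < t) (c r : ℝ) :
    HasDerivAt (levyErfcTerm c r)
      (2 / √π * exp (-(r ^ 2 * t + c ^ 2 / (4 * t))) * (c / (4 * t * √t) - r / (2 * √t))) t := by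
  have hexp : exp (c * r) * exp (-levyArg c r t ^ 2)
      = exp (-(r ^ 2 * t + c ^ 2 / (4 * t))) := by
    rw [← exp_add, sq_levyArg ht]
    ring_nf
  refine ((((hasDerivAt_erf _).comp t (hasDerivAt_levyArg ht c r)).const_sub 1).const_mul
    (exp (c * r))).congr_deriv ?_
  rw [← hexp]
  ring

theorem tendsto_levyArg_nhdsGT_zero {c : ℝ} (hc : 0 < c) (r : ℝ) :
    Tendsto (levyArg c r) (𝓝[>] 0) atTop := by
  have hsqrt : Tendsto sqrt (𝓝[>] 0) (𝓝[>] 0) :=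
    tendsto_nhdsWithin_iff.2 ⟨(continuous_sqrt.tendsto' 0 0 sqrt_zero).mono_left
      nhdsWithin_le_nhds, eventually_nhdsWithin_of_forall fun t ht => sqrt_pos.2 ht⟩
  have hinv : Tendsto (fun t => c / (2 * √t)) (𝓝[>] 0) atTop :=
    ((tendsto_inv_nhdsGT_zero.comp hsqrt).const_mul_atTop (half_pos hc)).congr fun t => by
      simp only [Function.comp_apply]; ring
  have hlin : Tendsto (fun t => r * √t) (𝓝[>] 0) (𝓝 0) := by
    simpa using ((continuous_sqrt.tendsto' 0 0 sqrt_zero).mono_left nhdsWithin_le_nhds).const_mul r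
  exact hinv.atTop_add hlin

theorem tendsto_const_div_two_mul_sqrt_atTop (c : ℝ) :
    Tendsto (fun t => c / (2 * √t)) atTop (𝓝 0) :=
  tendsto_const_nhds.div_atTop (tendsto_sqrt_atTop.const_mul_atTop two_pos)

theorem tendsto_levyArg_atTop (c : ℝ) {r : ℝ} (hr : 0 < r) :
    Tendsto (levyArg c r) atTop atTop :=
  (tendsto_const_div_two_mul_sqrt_atTop c).add_atTop (tendsto_sqrt_atTop.const_mul_atTop hr)

theorem tendsto_levyArg_atTop_of_neg (c : ℝ) {r : ℝ} (hr : r < 0) :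
    Tendsto (levyArg c r) atTop atBot :=
  (tendsto_const_div_two_mul_sqrt_atTop c).add_atBot
    (tendsto_sqrt_atTop.const_mul_atTop_of_neg hr)

theorem tendsto_levyErfcTerm_nhdsGT_zero {c : ℝ} (hc : 0 < c) (r : ℝ) :
    Tendsto (levyErfcTerm c r) (𝓝[>] 0) (𝓝 0) := by
  have h := ((tendsto_erf_atTop.comp (tendsto_levyArg_nhdsGT_zero hc r)).const_sub 1).const_mul
    (exp (c * r))
  rwa [sub_self, mul_zero] at h

theorem tendsto_levyErfcTerm_atTop (c : ℝ) {r : ℝ} (hr : 0 < r) :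
    Tendsto (levyErfcTerm c r) atTop (𝓝 0) := by
  have h := ((tendsto_erf_atTop.comp (tendsto_levyArg_atTop c hr)).const_sub 1).const_mul
    (exp (c * r))
  rwa [sub_self, mul_zero] at h

theorem tendsto_levyErfcTerm_atTop_of_neg (c : ℝ) {r : ℝ} (hr : r < 0) :
    Tendsto (levyErfcTerm c r) atTop (𝓝 (2 * exp (c * r))) := by
  have h := ((tendsto_erf_atBot.comp (tendsto_levyArg_atTop_of_neg c hr)).const_sub 1).const_mul
    (exp (c * r))
  rwa [sub_neg_eq_add, one_add_one_eq_two, mul_comm (exp _)] at h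

noncomputable def levyAntideriv (c r t : ℝ) : ℝ := (levyErfcTerm c (-r) t + levyErfcTerm c r t) / 2

noncomputable def levyDensity (c r t : ℝ) : ℝ :=
  c / (2 * √π) * t ^ (-(3:ℝ) / 2) * exp (-(r ^ 2 * t + c ^ 2 / (4 * t)))

theorem rpow_neg_three_halves {t : ℝ} (ht : 0 < t) : t ^ (-(3:ℝ) / 2) = (t * √t)⁻¹ := by
  rw [show -(3:ℝ) / 2 = -(1 + 1 / 2) by norm_num, rpow_neg ht.le, rpow_add ht, rpow_one,
    sqrt_eq_rpow]

theorem hasDerivAt_levyAntideriv {t : ℝ} (ht : 0 < t) (c r : ℝ) :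
    HasDerivAt (levyAntideriv c r) (levyDensity c r t) t := by
  refine ((hasDerivAt_levyErfcTerm ht c (-r)).add (hasDerivAt_levyErfcTerm ht c r)).div_const 2
    |>.congr_deriv ?_
  rw [levyDensity, rpow_neg_three_halves ht, neg_sq]
  ring

theorem tendsto_levyAntideriv_nhdsGT_zero {c : ℝ} (hc : 0 < c) (r : ℝ) :
    Tendsto (levyAntideriv c r) (𝓝[>] 0) (𝓝 0) := by
  have h := ((tendsto_levyErfcTerm_nhdsGT_zero hc (-r)).add
    (tendsto_levyErfcTerm_nhdsGT_zero hc r)).div_const 2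
  rwa [add_zero, zero_div] at h

theorem tendsto_levyAntideriv_atTop (c : ℝ) {r : ℝ} (hr : 0 < r) :
    Tendsto (levyAntideriv c r) atTop (𝓝 (exp (-(c * r)))) := by
  have h := ((tendsto_levyErfcTerm_atTop_of_neg c (neg_neg_of_pos hr)).add
    (tendsto_levyErfcTerm_atTop c hr)).div_const 2
  rwa [add_zero, mul_div_cancel_left₀ _ two_ne_zero, mul_neg] at h

theorem integral_Ioi_levyDensity {c r : ℝ} (hc : 0 < c) (hr : 0 < r) :
    ∫ t in Ioi 0, levyDensity c r t = exp (-(c * r)) := by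
  set g := Function.update (levyAntideriv c r) 0 0
  have hcont : ContinuousWithinAt g (Ici 0) 0 := by
    rw [continuousWithinAt_update_same, Ici_sdiff_left]
    exact tendsto_levyAntideriv_nhdsGT_zero hc r
  have hderiv (t : ℝ) (ht : t ∈ Ioi 0) : HasDerivAt g (levyDensity c r t) t :=
    (hasDerivAt_levyAntideriv ht c r).congr_of_eventuallyEq <| by
      filter_upwards [eventually_ne_nhds (ne_of_gt ht)] with s hs
      exact Function.update_of_ne hs _ _
  have hnonneg (t : ℝ) (ht : t ∈ Ioi 0) : 0 ≤ levyDensity c r t := by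
    have : 0 < t := ht
    unfold levyDensity
    positivity
  have hlim : Tendsto g atTop (𝓝 (exp (-(c * r)))) :=
    (tendsto_levyAntideriv_atTop c hr).congr' <| by
      filter_upwards [eventually_ne_atTop 0] with s hs
      exact (Function.update_of_ne hs _ _).symm
  simpa [g] using integral_Ioi_of_hasDerivAt_of_nonneg hcont hderiv hnonneg hlim

/-- Laplace transform identity `L{Γ(t)} = χ(η,p)` with
`Γ(t) = (η/(2a√π))·t^{−3/2}·exp(−bt − η²/(4a²t))` and
`χ(η,p) = exp(−η√(b+p)/a)`. -/
theorem stmt_10 (a η b p : ℝ) (ha : 0 < a) (hη : 0 < η) (hbp : 0 < b + p) :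
    ∫ t in Ioi (0:ℝ),
        Real.exp (-p * t) * (η / (2 * a * Real.sqrt π)) * t ^ (-(3:ℝ)/2)
          * Real.exp (-b * t) * Real.exp (-η ^ 2 / (4 * a ^ 2 * t))
      = Real.exp (-η * Real.sqrt (b + p) / a) := by
  have hintegrand : (fun t : ℝ => Real.exp (-p * t) * (η / (2 * a * Real.sqrt π))
      * t ^ (-(3:ℝ)/2) * Real.exp (-b * t) * Real.exp (-η ^ 2 / (4 * a ^ 2 * t)))
      = levyDensity (η / a) √(b + p) := by
    funext t
    rw [levyDensity, sq_sqrt hbp.le,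
      show -((b + p) * t + (η / a) ^ 2 / (4 * t)) = -p * t + -b * t + -η ^ 2 / (4 * a ^ 2 * t) by
        field_simp; ring,
      exp_add, exp_add]
    field_simp
  rw [hintegrand, integral_Ioi_levyDensity (div_pos hη ha) (sqrt_pos.2 hbp)]
  congr 1
  ring
end

section
/- Let a > 0, b ≥ 0, L > 0, and let α₁, β₁, α₂, β₂ ∈ ℝ satisfy α₁² + β₁² ≠ 0 and α₂² + β₂² ≠ 0. Define, for p > 0, D(p) = −(1/4)·(a²α₁α₂ − aα₁β₂ + aα₂β₁)·exp(−2L·√(b+p)/a)/(b+p) + (1/4)·β₁β₂·exp(−2L·√(b+p)/a) + (1/4)·(a²α₁α₂ + aα₁β₂ − aα₂β₁)/(b+p) − (1/4)·β₁β₂. Then D is not identically zero on (0, ∞); that is, there exists p > 0 with D(p) ≠ 0. -/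
/-!
Put `q = b + p` and `E(q) = exp (-2L√q / a)`. Then `4 D = (C - A E) / q + β₁β₂ (E - 1)` with
`A, C = a²α₁α₂ ∓ a (α₁β₂ - α₂β₁)`. Since `E(q) → 0` and `E > 0`, the functions `E - 1`, `1 / q`
and `E / q` are linearly independent at infinity, so `D ≡ 0` would force `β₁β₂ = 0` and
`A = C = 0`, i.e. `α₁α₂ + β₁β₂ = 0 = α₁β₂ - α₂β₁`. By the two-square identity
`(α₁² + β₁²)(α₂² + β₂²) = (α₁α₂ + β₁β₂)² + (α₁β₂ - α₂β₁)²` one of the boundary conditions is then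
trivial.
-/

open Filter Topology Real

theorem tendsto_exp_neg_mul_sqrt_atTop {κ : ℝ} (hκ : 0 < κ) :
    Tendsto (fun q => exp (-κ * √q)) atTop (𝓝 0) :=
  tendsto_exp_atBot.comp (tendsto_sqrt_atTop.const_mul_atTop_of_neg (neg_neg_of_pos hκ))

theorem coeffs_eq_zero_of_eventually_eq_zero {e : ℝ → ℝ} (he : Tendsto e atTop (𝓝 0))
    (he0 : ∀ᶠ q in atTop, e q ≠ 0) {A B C : ℝ}
    (h : ∀ᶠ q in atTop, (C - A * e q) / q + B * (e q - 1) = 0) :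
    A = 0 ∧ B = 0 ∧ C = 0 := by
  have hlimB : Tendsto (fun q => (C - A * e q) / q + B * (e q - 1)) atTop (𝓝 (0 + B * (0 - 1))) :=
    (((tendsto_const_nhds.sub (he.const_mul A)).div_atTop tendsto_id).add
      ((he.sub_const 1).const_mul B))
  have hB : B = 0 := by
    have := tendsto_nhds_unique hlimB (tendsto_const_nhds.congr' (h.mono fun _ hq => hq.symm))
    linarith
  subst hB
  have hCA : ∀ᶠ q in atTop, C - A * e q = 0 := by
    filter_upwards [h, eventually_gt_atTop 0] with q hq hq0
    simpa [hq0.ne'] using hq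
  have hC : C = 0 := by
    have hlimC : Tendsto (fun q => C - A * e q) atTop (𝓝 (C - A * 0)) :=
      tendsto_const_nhds.sub (he.const_mul A)
    rw [mul_zero, sub_zero] at hlimC
    exact tendsto_nhds_unique hlimC (tendsto_const_nhds.congr' (hCA.mono fun _ hq => hq.symm))
  subst hC
  obtain ⟨q, hq, hq0⟩ := (hCA.and he0).exists
  have hAe : A * e q = 0 := by linarith
  exact ⟨(mul_eq_zero.mp hAe).resolve_right hq0, rfl, rfl⟩

theorem sq_add_sq_mul_sq_add_sq_eq_zero {a α₁ β₁ α₂ β₂ : ℝ} (ha : a ≠ 0)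
    (hA : a ^ 2 * α₁ * α₂ - a * α₁ * β₂ + a * α₂ * β₁ = 0) (hB : β₁ * β₂ = 0)
    (hC : a ^ 2 * α₁ * α₂ + a * α₁ * β₂ - a * α₂ * β₁ = 0) :
    (α₁ ^ 2 + β₁ ^ 2) * (α₂ ^ 2 + β₂ ^ 2) = 0 := by
  have hαα : α₁ * α₂ = 0 := by
    have : (2 * a ^ 2) * (α₁ * α₂) = 0 := by linear_combination hA + hC
    exact (mul_eq_zero.mp this).resolve_left (by positivity)
  have hcross : α₁ * β₂ - α₂ * β₁ = 0 := by
    have : (2 * a) * (α₁ * β₂ - α₂ * β₁) = 0 := by linear_combination hC - hA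
    exact (mul_eq_zero.mp this).resolve_left (mul_ne_zero two_ne_zero ha)
  linear_combination (α₁ * α₂ + β₁ * β₂) * (hαα + hB) + (α₁ * β₂ - α₂ * β₁) * hcross

theorem stmt_14_general (a b L : ℝ) (ha : 0 < a) (hL : 0 < L)
    (α₁ β₁ α₂ β₂ : ℝ) (h1 : α₁ ^ 2 + β₁ ^ 2 ≠ 0) (h2 : α₂ ^ 2 + β₂ ^ 2 ≠ 0)
    (D : ℝ → ℝ)
    (hD : ∀ p, D p =
      -(1/4) * (a ^ 2 * α₁ * α₂ - a * α₁ * β₂ + a * α₂ * β₁)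
          * Real.exp (-2 * L * Real.sqrt (b + p) / a) / (b + p)
        + (1/4) * β₁ * β₂ * Real.exp (-2 * L * Real.sqrt (b + p) / a)
        + (1/4) * (a ^ 2 * α₁ * α₂ + a * α₁ * β₂ - a * α₂ * β₁) / (b + p)
        - (1/4) * β₁ * β₂) :
    ∃ p : ℝ, 0 < p ∧ D p ≠ 0 := by
  by_contra! hD0
  have hE : Tendsto (fun q => exp (-2 * L * √q / a)) atTop (𝓝 0) := by
    convert tendsto_exp_neg_mul_sqrt_atTop (div_pos (mul_pos two_pos hL) ha) using 3
    ring
  have hvanish : ∀ᶠ q in atTop,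
      ((a ^ 2 * α₁ * α₂ + a * α₁ * β₂ - a * α₂ * β₁)
          - (a ^ 2 * α₁ * α₂ - a * α₁ * β₂ + a * α₂ * β₁) * exp (-2 * L * √q / a)) / q
        + β₁ * β₂ * (exp (-2 * L * √q / a) - 1) = 0 := by
    filter_upwards [eventually_gt_atTop b] with q hq
    have hDq := hD (q - b)
    rw [hD0 (q - b) (sub_pos.mpr hq), add_sub_cancel] at hDq
    linear_combination -4 * hDq
  obtain ⟨hA, hB, hC⟩ :=
    coeffs_eq_zero_of_eventually_eq_zero hE (.of_forall fun _ => (exp_pos _).ne') hvanish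
  exact mul_ne_zero h1 h2 (sq_add_sq_mul_sq_add_sq_eq_zero ha.ne' hA hB hC)

/-- The determinant `D(p)` of the Laplace-domain linear system (S) is not
identically zero on `(0, ∞)` under the admissibility conditions on the
boundary coefficients. -/
theorem stmt_14 (a b L : ℝ) (ha : 0 < a) (hb : 0 ≤ b) (hL : 0 < L)
    (α₁ β₁ α₂ β₂ : ℝ) (h1 : α₁ ^ 2 + β₁ ^ 2 ≠ 0) (h2 : α₂ ^ 2 + β₂ ^ 2 ≠ 0)
    (D : ℝ → ℝ)
    (hD : ∀ p, D p =
      -(1/4) * (a ^ 2 * α₁ * α₂ - a * α₁ * β₂ + a * α₂ * β₁)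
          * Real.exp (-2 * L * Real.sqrt (b + p) / a) / (b + p)
        + (1/4) * β₁ * β₂ * Real.exp (-2 * L * Real.sqrt (b + p) / a)
        + (1/4) * (a ^ 2 * α₁ * α₂ + a * α₁ * β₂ - a * α₂ * β₁) / (b + p)
        - (1/4) * β₁ * β₂) :
    ∃ p : ℝ, 0 < p ∧ D p ≠ 0 :=
  stmt_14_general a b L ha hL α₁ β₁ α₂ β₂ h1 h2 D hD
end

section
/- Let a > 0, b ≥ 0, α₁ ∈ ℝ and β₁ ≠ 0. Then, as p → +∞, the function p ↦ −a/(β₁·√(b+p) − a·α₁) − ( −(a/β₁)·p^{−1/2} − (a²α₁/β₁²)·p^{−1} − (1/β₁)·(−(1/2)·a·b + a³α₁²/β₁²)·p^{−3/2} ) is O(p^{−2}). -/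
/-!
With `t = p ^ (-1/2)` one has `√(b + p) = √(1 + b t²) / t`, so the function becomes
`-a t / (β₁ s - a α₁ t)` with `s = √(1 + b t²)`, and the subtracted expansion is a cubic in `t`.
Since `s - 1 = b t² / (s + 1)`, the difference is exactly `t⁴ R(t)` with `R` continuous at
`t = 0`; hence it is `O(t⁴) = O(p⁻²)`.
-/

open Filter Asymptotics Topology

theorem isBigO_pow_mul_comp {ι : Type*} {l : Filter ι} {u : ι → ℝ} {G : ℝ → ℝ} (n : ℕ)
    (hu : Tendsto u l (𝓝 0)) (hG : ContinuousAt G 0) :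
    (fun x => u x ^ n * G (u x)) =O[l] fun x => u x ^ n := by
  simpa using (isBigO_refl (fun x => u x ^ n) l).mul ((hG.tendsto.comp hu).isBigO_one ℝ)

theorem rpow_neg_half_pow {p : ℝ} (hp : 0 ≤ p) (n : ℕ) :
    (p ^ (-(1:ℝ)/2)) ^ n = p ^ (-(n:ℝ)/2) := by
  rw [← Real.rpow_natCast, ← Real.rpow_mul hp]; ring_nf

theorem sqrt_add_eq_div_rpow_neg_half (b : ℝ) {p : ℝ} (hp : 0 < p) :
    √(b + p) = √(1 + b * (p ^ (-(1:ℝ)/2)) ^ 2) / p ^ (-(1:ℝ)/2) := by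
  rw [rpow_neg_half_pow hp.le, show (-((2:ℕ):ℝ)/2) = -1 by norm_num, Real.rpow_neg_one,
    neg_div, Real.rpow_neg hp.le, div_inv_eq_mul, ← Real.sqrt_eq_rpow,
    ← Real.sqrt_mul' _ hp.le]
  congr 1; field_simp; ring

/-- `s` stands for `√(1 + b t²)`. -/
noncomputable def expansionRemainder (a b α β s t : ℝ) : ℝ :=
  let k := a * α / β;
  -a * (k * (k ^ 2 - b / 2) - b * k / (s + 1)
      + b * t * (b / (2 * (s + 1) ^ 2) - (k ^ 2 - b / 2) / (s + 1))) / (β * s - a * α * t)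

theorem sub_expansion_eq_mul_expansionRemainder {a b α β s t : ℝ} (hβ : β ≠ 0) (ht : t ≠ 0)
    (hs : s ^ 2 = 1 + b * t ^ 2) (hs1 : s + 1 ≠ 0) (hD : β * s - a * α * t ≠ 0) :
    -a / (β * (s / t) - a * α)
        - (-(a / β) * t - (a ^ 2 * α / β ^ 2) * t ^ 2
            - (1 / β) * (-(1/2) * a * b + a ^ 3 * α ^ 2 / β ^ 2) * t ^ 3)
      = t ^ 4 * expansionRemainder a b α β s t := by
  have hb : b = (s ^ 2 - 1) / t ^ 2 := by field_simp; linarith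
  rw [show β * (s / t) - a * α = (β * s - a * α * t) / t by field_simp]
  unfold expansionRemainder
  subst hb
  field_simp
  ring

theorem continuousAt_expansionRemainder (a b α β : ℝ) (hβ : β ≠ 0) :
    ContinuousAt (fun t => expansionRemainder a b α β √(1 + b * t ^ 2) t) 0 := by
  have hs : ContinuousAt (fun t : ℝ => √(1 + b * t ^ 2)) 0 := by fun_prop
  unfold expansionRemainder
  exact ContinuousAt.div (by fun_prop (disch := simp)) (by fun_prop) (by simpa using hβ)

theorem stmt_15_general (a b α₁ β₁ : ℝ) (hβ : β₁ ≠ 0) :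
    (fun p : ℝ =>
        -a / (β₁ * Real.sqrt (b + p) - a * α₁)
          - (-(a / β₁) * p ^ (-(1:ℝ)/2)
              - (a ^ 2 * α₁ / β₁ ^ 2) * p⁻¹
              - (1 / β₁) * (-(1/2) * a * b + a ^ 3 * α₁ ^ 2 / β₁ ^ 2) * p ^ (-(3:ℝ)/2)))
      =O[atTop] fun p : ℝ => p ^ (-(2:ℝ)) := by
  set u : ℝ → ℝ := fun p => p ^ (-(1:ℝ)/2)
  have hu : Tendsto u atTop (𝓝 0) := by
    simpa [u, neg_div] using tendsto_rpow_neg_atTop (by norm_num : (0:ℝ) < 1 / 2)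
  have hsq : ∀ᶠ t in 𝓝 (0:ℝ), 0 < 1 + b * t ^ 2 :=
    (by fun_prop : Continuous fun t : ℝ => 1 + b * t ^ 2).continuousAt.eventually_const_lt
      (by norm_num)
  have hden : ∀ᶠ t in 𝓝 (0:ℝ), β₁ * √(1 + b * t ^ 2) - a * α₁ * t ≠ 0 :=
    (by fun_prop : Continuous fun t : ℝ => β₁ * √(1 + b * t ^ 2) - a * α₁ * t).continuousAt
      |>.eventually_ne (by simpa using hβ)
  have hpow : ∀ᶠ p in atTop, ∀ n : ℕ, p ^ (-(n:ℝ)/2) = u p ^ n := by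
    filter_upwards [eventually_ge_atTop 0] with p hp n using (rpow_neg_half_pow hp n).symm
  refine (isBigO_pow_mul_comp 4 hu (continuousAt_expansionRemainder a b α₁ β₁ hβ)).congr' ?_ ?_
  · filter_upwards [hu.eventually hsq, hu.eventually hden, eventually_gt_atTop 0, hpow]
      with p hpos hne hp hpow
    have hu0 : u p ≠ 0 := (Real.rpow_pos_of_pos hp _).ne'
    rw [sqrt_add_eq_div_rpow_neg_half b hp]
    have e2 : p⁻¹ = u p ^ 2 := by rw [← hpow 2]; norm_num [Real.rpow_neg_one]
    have e3 : p ^ (-(3:ℝ)/2) = u p ^ 3 := by rw [← hpow 3]; norm_num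
    rw [e2, e3]
    exact (sub_expansion_eq_mul_expansionRemainder hβ hu0 (Real.sq_sqrt hpos.le) (by positivity) hne).symm
  · filter_upwards [hpow] with p hp
    rw [← hp 4]; norm_num

/-- Second-order asymptotic expansion, as `p → +∞`, of the coefficient
`−a/(β₁√(b+p) − aα₁)` of `G₁(p)` in the boundary value `U(l1,p)`:
the remainder is `O(p⁻²)`. -/
theorem stmt_15 (a b α₁ β₁ : ℝ) (ha : 0 < a) (hb : 0 ≤ b) (hβ : β₁ ≠ 0) :
    (fun p : ℝ =>
        -a / (β₁ * Real.sqrt (b + p) - a * α₁)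
          - (-(a / β₁) * p ^ (-(1:ℝ)/2)
              - (a ^ 2 * α₁ / β₁ ^ 2) * p⁻¹
              - (1 / β₁) * (-(1/2) * a * b + a ^ 3 * α₁ ^ 2 / β₁ ^ 2) * p ^ (-(3:ℝ)/2)))
      =O[atTop] fun p : ℝ => p ^ (-(2:ℝ)) :=
  stmt_15_general a b α₁ β₁ hβ
end

section
/- Let p > 0 and define R : ℝ → ℝ by R(x) = −(1/(8·p^{3/2}))·( −4x·√p + 2·exp(2(x−5)·√p) − exp(−2x·√p) − exp(2(x−10)·√p) ). Then for every x ∈ (0, 5), −(1/4)·R''(x) + p·R(x) = x/2. -/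
/-!
Both exponents occurring in `R` are `±2√p`, so after factoring out constants the exponential
part of `R` is `B e^{2√p x} + C e^{-2√p x}`, which `-(1/4) d²/dx² + p` annihilates. Only the
linear part `x / (2p)` of `R` survives, and `p · x / (2p) = x / 2`.
-/

open Set

open Real

lemma hasDerivAt_linear_add_exp_add_exp (A D B C a x : ℝ) :
    HasDerivAt (fun x => A * x + D + B * exp (a * x) + C * exp (-(a * x)))
      (0 * x + A + (a * B) * exp (a * x) + (-(a * C)) * exp (-(a * x))) x := by
  have hpos : HasDerivAt (fun x => exp (a * x)) (exp (a * x) * a) x :=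
    ((hasDerivAt_id x).const_mul a).exp.congr_deriv (by simp)
  have hneg : HasDerivAt (fun x => exp (-(a * x))) (exp (-(a * x)) * -a) x :=
    ((hasDerivAt_id x).const_mul a).neg.exp.congr_deriv (by simp)
  exact ((((hasDerivAt_id x).const_mul A).add_const D).add (hpos.const_mul B)).add
    (hneg.const_mul C) |>.congr_deriv (by ring)

lemma deriv_deriv_linear_add_exp_add_exp (A D B C a x : ℝ) :
    deriv (deriv fun x => A * x + D + B * exp (a * x) + C * exp (-(a * x))) x
      = a ^ 2 * (B * exp (a * x) + C * exp (-(a * x))) := by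
  have hderiv : deriv (fun x => A * x + D + B * exp (a * x) + C * exp (-(a * x)))
      = fun x => 0 * x + A + (a * B) * exp (a * x) + (-(a * C)) * exp (-(a * x)) :=
    funext fun y => (hasDerivAt_linear_add_exp_add_exp A D B C a y).deriv
  rw [hderiv, (hasDerivAt_linear_add_exp_add_exp 0 A _ _ a x).deriv]
  ring

lemma neg_quarter_deriv_deriv_add_sq_mul_of_eq_linear_add_exp_add_exp
    {f : ℝ → ℝ} {A D B C s : ℝ}
    (hf : f = fun x => A * x + D + B * exp (2 * s * x) + C * exp (-(2 * s * x))) (x : ℝ) :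
    -(1 / 4) * deriv (deriv f) x + s ^ 2 * f x = s ^ 2 * (A * x + D) := by
  subst hf
  rw [deriv_deriv_linear_add_exp_add_exp]
  ring

lemma rpow_three_halves_eq_sqrt_pow_three {p : ℝ} (hp : 0 ≤ p) : p ^ ((3:ℝ)/2) = √p ^ 3 := by
  rw [sqrt_eq_rpow, ← rpow_natCast, ← rpow_mul hp]
  norm_num

lemma exp_two_mul_sub_mul (x c s : ℝ) :
    exp (2 * (x - c) * s) = exp (-2 * c * s) * exp (2 * s * x) := by
  rw [← exp_add]
  ring_nf

/-- Verification in the Laplace domain that the remaining term `R(x,p)` of the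
operational solution satisfies `−(1/4)R'' + pR = x/2` on `(0, 5)`. -/
theorem stmt_19 (p : ℝ) (hp : 0 < p) (R : ℝ → ℝ)
    (hR : ∀ x, R x = -(1 / (8 * p ^ ((3:ℝ)/2))) *
      (-4 * x * Real.sqrt p + 2 * Real.exp (2 * (x - 5) * Real.sqrt p)
        - Real.exp (-2 * x * Real.sqrt p) - Real.exp (2 * (x - 10) * Real.sqrt p))) :
    ∀ x ∈ Ioo (0:ℝ) 5, -(1/4) * deriv (deriv R) x + p * R x = x / 2 := by
  intro x _
  simp only [rpow_three_halves_eq_sqrt_pow_three hp.le] at hR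
  set s := √p
  have hs : 0 < s := sqrt_pos.mpr hp
  have hsp : s ^ 2 = p := sq_sqrt hp.le
  have hR_split : R = fun x => 1 / (2 * s ^ 2) * x + 0
      + (2 * exp (-2 * 5 * s) - exp (-2 * 10 * s)) / (-8 * s ^ 3) * exp (2 * s * x)
      + 1 / (8 * s ^ 3) * exp (-(2 * s * x)) := by
    funext y
    rw [hR, exp_two_mul_sub_mul, exp_two_mul_sub_mul, show -2 * y * s = -(2 * s * y) by ring]
    field_simp
    ring
  rw [← hsp, neg_quarter_deriv_deriv_add_sq_mul_of_eq_linear_add_exp_add_exp hR_split]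
  field_simp
  ring
end
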